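/- Multivariate deformed Vandermonde formula in rising-factorial form: let 0 < τ₂ < τ₁ be reals, let n, k be naturals with k ≥ 1, and let x₁, …, x_{k+1} be real numbers. Then [x₁ + ⋯ + x_{k+1} + n − 1]_n = Σ M(n; r₁,…,r_k) · τ₁^{Σ_{j=1}^{k} x_j(n − s_j)} · τ₂^{Σ_{j=1}^{k} r_j z_j} · ∏_{j=1}^{k+1} [x_j + r_j − 1]_{r_j}, where the sum runs over all tuples (r₁,…,r_k) of naturals with r₁ + ⋯ + r_k ≤ n, and where s_j = r₁ + ⋯ + r_j, r_{k+1} = n − s_k, and z_j = x_{j+1} + ⋯ + x_{k+1}. -/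

import Mathlib

open Finset

noncomputable def dnum (τ₁ τ₂ x : ℝ) : ℝ := (τ₁ ^ x - τ₂ ^ x) / (τ₁ - τ₂)

noncomputable def dfac (τ₁ τ₂ : ℝ) (r : ℕ) : ℝ :=
  ∏ j ∈ Finset.range r, dnum τ₁ τ₂ ((j : ℝ) + 1)

noncomputable def dfall (τ₁ τ₂ x : ℝ) (r : ℕ) : ℝ :=
  ∏ i ∈ Finset.range r, dnum τ₁ τ₂ (x - (i : ℝ))

noncomputable def dbinom (τ₁ τ₂ x : ℝ) (r : ℕ) : ℝ := dfall τ₁ τ₂ x r / dfac τ₁ τ₂ r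

noncomputable def dmulti (τ₁ τ₂ x : ℝ) {k : ℕ} (r : Fin k → ℕ) : ℝ :=
  dfall τ₁ τ₂ x (∑ j, r j) / ∏ j, dfac τ₁ τ₂ (r j)

/-!
Splitting `[a + b + n] = τ₁^(a+r) [b + (n - r)] + τ₂^(b+n-r) [a + r]` inside each summand and
recombining with the deformed Pascal rule
`[n+1 choose s+1] = τ₁^(s+1) [n choose s+1] + τ₂^(n-s) [n choose s]` proves the two-variable
formula by induction on `n`. The multivariate formula then follows by induction on `k`: apply the
two-variable formula to `x₁` and `x₂ + ⋯ + x_{k+1}` and expand the second rising factorial by the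
induction hypothesis, using `M(n; r₁, r₂, …) = [n choose r₁] M(n - r₁; r₂, …)`.
-/

lemma Finset.sum_range_succ_eq_of_shift {M : Type*} [AddCommMonoid M] {T Y X : ℕ → M} (m : ℕ)
    (h0 : T 0 = Y 0) (hsucc : ∀ s < m, T (s + 1) = Y (s + 1) + X s) :
    ∑ s ∈ range (m + 1), T s = ∑ s ∈ range (m + 1), Y s + ∑ s ∈ range m, X s := by
  rw [sum_range_succ', sum_range_succ' Y,
    sum_congr rfl fun s hs => hsucc s (mem_range.1 hs), sum_add_distrib, h0]
  abel

def boundedTuples (k n : ℕ) : Finset (Fin k → ℕ) :=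
  (Fintype.piFinset fun _ : Fin k => range (n + 1)).filter fun r => ∑ j, r j ≤ n

lemma mem_boundedTuples {k n : ℕ} {r : Fin k → ℕ} : r ∈ boundedTuples k n ↔ ∑ j, r j ≤ n := by
  simp only [boundedTuples, mem_filter, Fintype.mem_piFinset, mem_range, and_iff_right_iff_imp]
  exact fun h j => Nat.lt_succ_of_le ((single_le_sum (fun i _ => Nat.zero_le (r i))
    (mem_univ j)).trans h)

lemma sum_boundedTuples_zero {M : Type*} [AddCommMonoid M] (n : ℕ) (G : (Fin 0 → ℕ) → M) :
    ∑ r ∈ boundedTuples 0 n, G r = G Fin.elim0 := by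
  rw [show boundedTuples 0 n = {Fin.elim0} by
    ext r; simp [mem_boundedTuples, eq_iff_true_of_subsingleton], sum_singleton]

lemma sum_boundedTuples_succ {M : Type*} [AddCommMonoid M] (k n : ℕ) (G : (Fin (k + 1) → ℕ) → M) :
    ∑ r ∈ boundedTuples (k + 1) n, G r =
      ∑ a ∈ range (n + 1), ∑ r ∈ boundedTuples k (n - a), G (Fin.cons a r) := by
  rw [sum_sigma']
  refine sum_nbij' (fun r => ⟨r 0, Fin.tail r⟩) (fun p => Fin.cons p.1 p.2) ?_ ?_ ?_ ?_ ?_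
  · intro r hr
    simp only [mem_boundedTuples, Fin.sum_univ_succ (f := r)] at hr
    simp only [mem_sigma, mem_range, mem_boundedTuples, Fin.tail]
    omega
  · intro p hp
    simp only [mem_sigma, mem_range, mem_boundedTuples] at hp
    simp only [mem_boundedTuples, Fin.sum_cons]
    omega
  · intro r _
    exact Fin.cons_self_tail r
  · intro p _
    simp
  · intro r _
    rw [Fin.cons_self_tail]

lemma Fin.sum_Iic_succ_cons {M : Type*} [AddCommMonoid M] {k : ℕ} (a : M) (f : Fin k → M)
    (j : Fin k) : ∑ i ∈ Iic j.succ, (Fin.cons a f : Fin (k + 1) → M) i = a + ∑ i ∈ Iic j, f i := by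
  simp only [← filter_ge_eq_Iic, sum_filter, Fin.sum_univ_succ, Fin.cons_zero, Fin.cons_succ,
    Fin.zero_le, if_true, Fin.succ_le_succ_iff]

lemma sum_mul_sub_sum_Iic_cons {k : ℕ} (x : Fin (k + 2) → ℝ) (m : ℝ) (a : ℕ) (r : Fin k → ℕ) :
    ∑ j : Fin (k + 1),
        x j.castSucc * (m - ((∑ i ∈ Iic j, (Fin.cons a r : Fin (k + 1) → ℕ) i : ℕ) : ℝ)) =
      x 0 * (m - a) +
        ∑ j : Fin k, Fin.tail x j.castSucc * ((m - a) - ((∑ i ∈ Iic j, r i : ℕ) : ℝ)) := by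
  rw [Fin.sum_univ_succ]
  simp [Fin.sum_Iic_succ_cons, Fin.tail, sub_sub, show Iic (0 : Fin (k + 1)) = {0} from Iic_bot]

lemma sum_mul_sum_filter_lt_cons {k : ℕ} (x : Fin (k + 2) → ℝ) (a : ℕ) (r : Fin k → ℕ) :
    ∑ j : Fin (k + 1), ((Fin.cons a r : Fin (k + 1) → ℕ) j : ℝ) *
        ∑ i ∈ univ.filter (fun i : Fin (k + 2) => (j : ℕ) < i), x i =
      a * ∑ i, Fin.tail x i + ∑ j : Fin k, (r j : ℝ) *
        ∑ i ∈ univ.filter (fun i : Fin (k + 1) => (j : ℕ) < i), Fin.tail x i := by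
  rw [Fin.sum_univ_succ]
  simp [sum_filter, Fin.sum_univ_succ (n := k + 1), Fin.tail]

section DeformedNumbers

variable {τ₁ τ₂ : ℝ}

lemma dnum_add (hτ₁ : 0 < τ₁) (hτ₂ : 0 < τ₂) (p q : ℝ) :
    dnum τ₁ τ₂ (p + q) = τ₁ ^ q * dnum τ₁ τ₂ p + τ₂ ^ p * dnum τ₁ τ₂ q := by
  simp only [dnum, Real.rpow_add hτ₁, Real.rpow_add hτ₂]
  ring

lemma dnum_pos (hτ₂ : 0 < τ₂) (hττ : τ₂ < τ₁) {x : ℝ} (hx : 0 < x) : 0 < dnum τ₁ τ₂ x :=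
  div_pos (sub_pos.2 (Real.rpow_lt_rpow hτ₂.le hττ hx)) (sub_pos.2 hττ)

lemma dfac_pos (hτ₂ : 0 < τ₂) (hττ : τ₂ < τ₁) (r : ℕ) : 0 < dfac τ₁ τ₂ r :=
  prod_pos fun _ _ => dnum_pos hτ₂ hττ (by positivity)

lemma dfac_succ (r : ℕ) : dfac τ₁ τ₂ (r + 1) = dfac τ₁ τ₂ r * dnum τ₁ τ₂ (r + 1) := by
  simp [dfac, prod_range_succ]

lemma dfall_add (x : ℝ) (p q : ℕ) :
    dfall τ₁ τ₂ x (p + q) = dfall τ₁ τ₂ x p * dfall τ₁ τ₂ (x - p) q := by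
  simp only [dfall, prod_range_add, Nat.cast_add, sub_add_eq_sub_sub]

lemma dfall_succ (x : ℝ) (m : ℕ) :
    dfall τ₁ τ₂ x (m + 1) = dfall τ₁ τ₂ x m * dnum τ₁ τ₂ (x - m) := by
  simp [dfall, prod_range_succ]

lemma dfall_succ' (x : ℝ) (m : ℕ) :
    dfall τ₁ τ₂ x (m + 1) = dnum τ₁ τ₂ x * dfall τ₁ τ₂ (x - 1) m := by
  rw [add_comm, dfall_add]
  simp [dfall]

lemma dfall_natCast_succ_self (n : ℕ) : dfall τ₁ τ₂ n (n + 1) = 0 := by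
  simp [dfall_succ, dnum]

lemma dfall_rising_succ (x : ℝ) (m : ℕ) :
    dfall τ₁ τ₂ (x + ↑(m + 1) - 1) (m + 1) = dnum τ₁ τ₂ (x + m) * dfall τ₁ τ₂ (x + m - 1) m := by
  rw [dfall_succ']
  push_cast
  ring_nf

lemma dbinom_zero (x : ℝ) : dbinom τ₁ τ₂ x 0 = 1 := by
  simp [dbinom, dfall, dfac]

lemma dbinom_natCast_succ_self (n : ℕ) : dbinom τ₁ τ₂ n (n + 1) = 0 := by
  rw [dbinom, dfall_natCast_succ_self, zero_div]

lemma dbinom_succ_succ (hτ₂ : 0 < τ₂) (hττ : τ₂ < τ₁) (n s : ℕ) :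
    dbinom τ₁ τ₂ ↑(n + 1) (s + 1) =
      τ₁ ^ ((s : ℝ) + 1) * dbinom τ₁ τ₂ n (s + 1) + τ₂ ^ ((n : ℝ) - s) * dbinom τ₁ τ₂ n s := by
  have hsplit : dnum τ₁ τ₂ ↑(n + 1) =
      τ₁ ^ ((s : ℝ) + 1) * dnum τ₁ τ₂ (n - s) + τ₂ ^ ((n : ℝ) - s) * dnum τ₁ τ₂ (s + 1) := by
    rw [← dnum_add (hτ₂.trans hττ) hτ₂]
    push_cast
    ring_nf
  have hfac := (dfac_pos hτ₂ hττ s).ne'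
  have hnum := (dnum_pos hτ₂ hττ (x := s + 1) (by positivity)).ne'
  rw [dbinom, dbinom, dbinom, dfall_succ', dfall_succ, hsplit, dfac_succ, Nat.cast_succ,
    add_sub_cancel_right]
  field_simp

lemma dnum_mul_rising_mul_rising (hτ₁ : 0 < τ₁) (hτ₂ : 0 < τ₂) (a b : ℝ) (r m : ℕ) :
    dnum τ₁ τ₂ (a + b + (r + m)) * (dfall τ₁ τ₂ (a + r - 1) r * dfall τ₁ τ₂ (b + m - 1) m) =
      τ₁ ^ (a + r) * (dfall τ₁ τ₂ (a + r - 1) r * dfall τ₁ τ₂ (b + ↑(m + 1) - 1) (m + 1)) +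
      τ₂ ^ (b + m) * (dfall τ₁ τ₂ (a + ↑(r + 1) - 1) (r + 1) * dfall τ₁ τ₂ (b + m - 1) m) := by
  rw [dfall_rising_succ, dfall_rising_succ,
    show a + b + (r + m) = (b + m) + (a + r) by ring, dnum_add hτ₁ hτ₂]
  ring

lemma dbinom_mul_rpow_succ_succ (hτ₂ : 0 < τ₂) (hττ : τ₂ < τ₁) (a b : ℝ) {n s : ℕ}
    (hs : s ≤ n) :
    dbinom τ₁ τ₂ ↑(n + 1) (s + 1) * τ₁ ^ (a * ((↑(n + 1) : ℝ) - ↑(s + 1))) *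
        τ₂ ^ ((↑(s + 1) : ℝ) * b) =
      dbinom τ₁ τ₂ n (s + 1) * τ₁ ^ (a * ((n : ℝ) - ↑(s + 1))) * τ₂ ^ ((↑(s + 1) : ℝ) * b) *
          τ₁ ^ (a + ↑(s + 1)) +
        dbinom τ₁ τ₂ n s * τ₁ ^ (a * ((n : ℝ) - s)) * τ₂ ^ ((s : ℝ) * b) * τ₂ ^ (b + ↑(n - s)) := by
  have hτ₁ : 0 < τ₁ := hτ₂.trans hττ
  have hτ₁pow : τ₁ ^ ((s : ℝ) + 1) * τ₁ ^ (a * ((n : ℝ) - s)) =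
      τ₁ ^ (a * ((n : ℝ) - ↑(s + 1))) * τ₁ ^ (a + ↑(s + 1)) := by
    rw [← Real.rpow_add hτ₁, ← Real.rpow_add hτ₁]; push_cast; ring_nf
  have hτ₂pow : τ₂ ^ ((n : ℝ) - s) * τ₂ ^ (↑(s + 1) * b) =
      τ₂ ^ ((s : ℝ) * b) * τ₂ ^ (b + ↑(n - s)) := by
    rw [← Real.rpow_add hτ₂, ← Real.rpow_add hτ₂, Nat.cast_sub hs]; push_cast; ring_nf
  rw [dbinom_succ_succ hτ₂ hττ,
    show a * ((↑(n + 1) : ℝ) - ↑(s + 1)) = a * ((n : ℝ) - s) by push_cast; ring]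
  linear_combination dbinom τ₁ τ₂ n (s + 1) * τ₂ ^ ((↑(s + 1) : ℝ) * b) * hτ₁pow +
    dbinom τ₁ τ₂ n s * τ₁ ^ (a * ((n : ℝ) - s)) * hτ₂pow

theorem deformed_vandermonde_rising (hτ₂ : 0 < τ₂) (hττ : τ₂ < τ₁) (a b : ℝ) (n : ℕ) :
    dfall τ₁ τ₂ (a + b + n - 1) n =
      ∑ r ∈ range (n + 1), dbinom τ₁ τ₂ n r * τ₁ ^ (a * ((n : ℝ) - r)) * τ₂ ^ ((r : ℝ) * b) *
        dfall τ₁ τ₂ (a + r - 1) r * dfall τ₁ τ₂ (b + ↑(n - r) - 1) (n - r) := by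
  have hτ₁ : 0 < τ₁ := hτ₂.trans hττ
  induction n with
  | zero => simp [dfall, dbinom, dfac]
  | succ n ih =>
    set T : ℕ → ℕ → ℝ := fun n r => dbinom τ₁ τ₂ n r * τ₁ ^ (a * ((n : ℝ) - r)) *
      τ₂ ^ ((r : ℝ) * b) * dfall τ₁ τ₂ (a + r - 1) r * dfall τ₁ τ₂ (b + ↑(n - r) - 1) (n - r)
    set Y : ℕ → ℝ := fun r => dbinom τ₁ τ₂ n r * τ₁ ^ (a * ((n : ℝ) - r)) * τ₂ ^ ((r : ℝ) * b) *
      τ₁ ^ (a + r) * (dfall τ₁ τ₂ (a + r - 1) r * dfall τ₁ τ₂ (b + ↑(n + 1 - r) - 1) (n + 1 - r))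
    set X : ℕ → ℝ := fun r => dbinom τ₁ τ₂ n r * τ₁ ^ (a * ((n : ℝ) - r)) * τ₂ ^ ((r : ℝ) * b) *
      τ₂ ^ (b + ↑(n - r)) * (dfall τ₁ τ₂ (a + ↑(r + 1) - 1) (r + 1) *
        dfall τ₁ τ₂ (b + ↑(n - r) - 1) (n - r))
    have hsplit : ∀ r ∈ range (n + 1), dnum τ₁ τ₂ (a + b + n) * T n r = Y r + X r := by
      intro r hr
      have hrn : r ≤ n := Nat.lt_succ_iff.1 (mem_range.1 hr)
      have hn : (n : ℝ) = r + ↑(n - r) := by rw [Nat.cast_sub hrn]; ring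
      have hstep := dnum_mul_rising_mul_rising hτ₁ hτ₂ a b r (n - r)
      rw [← hn, ← Nat.sub_add_comm hrn] at hstep
      simp only [T, Y, X]
      linear_combination dbinom τ₁ τ₂ n r * τ₁ ^ (a * ((n : ℝ) - r)) * τ₂ ^ ((r : ℝ) * b) * hstep
    have hpascal : ∀ s < n + 1, T (n + 1) (s + 1) = Y (s + 1) + X s := by
      intro s hs
      simp only [T, Y, X]
      rw [dbinom_mul_rpow_succ_succ hτ₂ hττ a b (Nat.lt_succ_iff.1 hs), Nat.add_sub_add_right]
      ring
    have hT0 : T (n + 1) 0 = Y 0 := by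
      simp only [T, Y, dbinom_zero, Nat.cast_zero, Nat.sub_zero, sub_zero, add_zero,
        Nat.cast_succ, mul_add_one, Real.rpow_add hτ₁, Real.rpow_zero]
      ring
    have hYtop : Y (n + 1) = 0 := by
      simp only [Y, dbinom_natCast_succ_self, zero_mul]
    calc dfall τ₁ τ₂ (a + b + ↑(n + 1) - 1) (n + 1)
        = ∑ r ∈ range (n + 1), dnum τ₁ τ₂ (a + b + n) * T n r := by
          rw [dfall_rising_succ (a + b), ih, mul_sum]
      _ = ∑ r ∈ range (n + 1), Y r + ∑ r ∈ range (n + 1), X r := by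
          rw [sum_congr rfl hsplit, sum_add_distrib]
      _ = ∑ r ∈ range (n + 1 + 1), T (n + 1) r := by
          rw [sum_range_succ_eq_of_shift _ hT0 hpascal, sum_range_succ Y (n + 1), hYtop, add_zero]

lemma dmulti_cons {k : ℕ} (x : ℝ) (a : ℕ) (r : Fin k → ℕ) :
    dmulti τ₁ τ₂ x (Fin.cons a r) = dbinom τ₁ τ₂ x a * dmulti τ₁ τ₂ (x - a) r := by
  simp only [dmulti, dbinom, Fin.sum_cons, Fin.prod_univ_succ, Fin.cons_zero, Fin.cons_succ,
    dfall_add, div_mul_div_comm]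

end DeformedNumbers

noncomputable def vandermondeSummand (τ₁ τ₂ : ℝ) {k : ℕ} (x : Fin (k + 1) → ℝ) (n : ℕ)
    (r : Fin k → ℕ) : ℝ :=
  dmulti τ₁ τ₂ (n : ℝ) r *
    τ₁ ^ (∑ j : Fin k, x j.castSucc * ((n : ℝ) - ((∑ i ∈ Finset.Iic j, r i : ℕ) : ℝ))) *
    τ₂ ^ (∑ j : Fin k, (r j : ℝ) *
      (∑ i ∈ Finset.univ.filter fun i : Fin (k + 1) => (j : ℕ) < (i : ℕ), x i)) *
    ∏ j : Fin (k + 1),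
      dfall τ₁ τ₂ (x j + ((Fin.snoc r (n - ∑ i, r i) : Fin (k + 1) → ℕ) j : ℝ) - 1)
        ((Fin.snoc r (n - ∑ i, r i) : Fin (k + 1) → ℕ) j)

lemma vandermondeSummand_cons {τ₁ τ₂ : ℝ} (hτ₁ : 0 < τ₁) (hτ₂ : 0 < τ₂) {k : ℕ}
    (x : Fin (k + 2) → ℝ) {n a : ℕ} (ha : a ≤ n) (r : Fin k → ℕ) :
    vandermondeSummand τ₁ τ₂ x n (Fin.cons a r) =
      dbinom τ₁ τ₂ n a * τ₁ ^ (x 0 * ((n : ℝ) - a)) * τ₂ ^ ((a : ℝ) * ∑ i, Fin.tail x i) *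
        dfall τ₁ τ₂ (x 0 + a - 1) a * vandermondeSummand τ₁ τ₂ (Fin.tail x) (n - a) r := by
  have hlast : n - ∑ i, (Fin.cons a r : Fin (k + 1) → ℕ) i = n - a - ∑ i, r i := by
    rw [Fin.sum_cons, Nat.sub_add_eq]
  simp only [vandermondeSummand, dmulti_cons, sum_mul_sub_sum_Iic_cons,
    sum_mul_sum_filter_lt_cons, Real.rpow_add hτ₁, Real.rpow_add hτ₂, Nat.cast_sub ha, hlast,
    ← Fin.cons_snoc_eq_snoc_cons, Fin.prod_univ_succ (n := k + 1), Fin.cons_zero, Fin.cons_succ,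
    Fin.tail]
  ring

theorem deformed_multivariate_vandermonde_rising_general
    (τ₁ τ₂ : ℝ) (hτ₂ : 0 < τ₂) (hττ : τ₂ < τ₁)
    (n k : ℕ) (x : Fin (k + 1) → ℝ) :
    dfall τ₁ τ₂ (∑ i, x i + n - 1) n =
      ∑ r ∈ (Fintype.piFinset fun _ : Fin k => Finset.range (n + 1)).filter
          (fun r => ∑ j, r j ≤ n),
        dmulti τ₁ τ₂ (n : ℝ) r *
          τ₁ ^ (∑ j : Fin k, x j.castSucc *
              ((n : ℝ) - ((∑ i ∈ Finset.Iic j, r i : ℕ) : ℝ))) *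
          τ₂ ^ (∑ j : Fin k, (r j : ℝ) *
              (∑ i ∈ Finset.univ.filter fun i : Fin (k + 1) => (j : ℕ) < (i : ℕ), x i)) *
          ∏ j : Fin (k + 1),
            dfall τ₁ τ₂ (x j + ((Fin.snoc r (n - ∑ i, r i) : Fin (k + 1) → ℕ) j : ℝ) - 1)
              ((Fin.snoc r (n - ∑ i, r i) : Fin (k + 1) → ℕ) j) := by
  change _ = ∑ r ∈ boundedTuples k n, vandermondeSummand τ₁ τ₂ x n r
  induction k generalizing n with
  | zero =>
    rw [sum_boundedTuples_zero]
    simp [vandermondeSummand, dmulti, dfall, dfac, Fin.snoc]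
  | succ k ih =>
    have hτ₁ : 0 < τ₁ := hτ₂.trans hττ
    have hsum : ∑ i, x i = x 0 + ∑ i, Fin.tail x i := Fin.sum_univ_succ x
    rw [hsum, deformed_vandermonde_rising hτ₂ hττ, sum_boundedTuples_succ]
    refine sum_congr rfl fun a ha => ?_
    rw [ih (n - a) (Fin.tail x), mul_sum]
    refine sum_congr rfl fun r _ => ?_
    rw [vandermondeSummand_cons hτ₁ hτ₂ x (Nat.lt_succ_iff.1 (mem_range.1 ha))]

/-- Multivariate deformed Vandermonde formula in rising-factorial form:
`[x₁+⋯+x_{k+1}+n−1]_n = Σ M(n; r₁,…,r_k) τ₁^{Σ_j x_j(n−s_j)}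
  τ₂^{Σ_j r_j z_j} Π_j [x_j+r_j−1]_{r_j}`,
summed over tuples `(r₁,…,r_k)` with `r₁+⋯+r_k ≤ n`, where `s_j = r₁+⋯+r_j`,
`r_{k+1} = n − s_k` and `z_j = x_{j+1}+⋯+x_{k+1}`. -/
theorem deformed_multivariate_vandermonde_rising
    (τ₁ τ₂ : ℝ) (hτ₂ : 0 < τ₂) (hττ : τ₂ < τ₁)
    (n k : ℕ) (hk : 1 ≤ k) (x : Fin (k + 1) → ℝ) :
    dfall τ₁ τ₂ (∑ i, x i + n - 1) n =
      ∑ r ∈ (Fintype.piFinset fun _ : Fin k => Finset.range (n + 1)).filter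
          (fun r => ∑ j, r j ≤ n),
        dmulti τ₁ τ₂ (n : ℝ) r *
          τ₁ ^ (∑ j : Fin k, x j.castSucc *
              ((n : ℝ) - ((∑ i ∈ Finset.Iic j, r i : ℕ) : ℝ))) *
          τ₂ ^ (∑ j : Fin k, (r j : ℝ) *
              (∑ i ∈ Finset.univ.filter fun i : Fin (k + 1) => (j : ℕ) < (i : ℕ), x i)) *
          ∏ j : Fin (k + 1),
            dfall τ₁ τ₂ (x j + ((Fin.snoc r (n - ∑ i, r i) : Fin (k + 1) → ℕ) j : ℝ) - 1)
              ((Fin.snoc r (n - ∑ i, r i) : Fin (k + 1) → ℕ) j) :=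
  deformed_multivariate_vandermonde_rising_general τ₁ τ₂ hτ₂ hττ n k x
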